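/- Assume Ã ⪰ 0. If Λ is a positive definite block-diagonal matrix and R, R' ∈ SO(p)ⁿ satisfy ΛR' = ÃR (one GPM step written in primal-dual form), then Λ − Ã is not positive definite; more precisely, the largest eigenvalue of Λ^{-1/2}ÃΛ^{-1/2} is at least 1, so λ_min(I − Λ^{-1/2}ÃΛ^{-1/2}) ≤ 0. -/

import Mathlib

/-!
Put `B = Λ^{-1/2} Ã Λ^{-1/2}`, `x = Λ^{1/2} R` and `y = Λ^{1/2} R'`, so that the step reads
`B x = y`. Since `Λ` is block diagonal and the blocks of `R`, `R'` are orthogonal,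
`‖x‖_F² = tr (Rᵀ Λ R) = tr Λ = ‖y‖_F²`. A symmetric matrix with all eigenvalues in `(-1, 1)`
strictly shrinks the Frobenius norm of every nonzero matrix, so the positive semidefinite `B` has
an eigenvalue `μ ≥ 1`. Then `1 - μ ≤ 0` lies in the spectrum of `I - B`, which is congruent to
`Λ - Ã`.
-/

open Matrix

/-- The `(i,j)` block of an `np × np` block matrix. -/
def blk {n p : ℕ} (M : Matrix (Fin n × Fin p) (Fin n × Fin p) ℝ) (i j : Fin n) :
    Matrix (Fin p) (Fin p) ℝ := fun a b => M (i, a) (j, b)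

/-- The `i`-th `p × p` block of a stacked `np × p` block column matrix. -/
def blkv {n p : ℕ} (R : Matrix (Fin n × Fin p) (Fin p) ℝ) (i : Fin n) :
    Matrix (Fin p) (Fin p) ℝ := fun a b => R (i, a) b

/-- The square root of a positive semidefinite matrix (Mathlib's former `Matrix.PosSemidef.sqrt`,
removed upstream; restored here with its old definition). -/
noncomputable def Matrix.PosSemidef.sqrt {m : Type*} [Fintype m] [DecidableEq m]
    {M : Matrix m m ℝ} (hM : M.PosSemidef) : Matrix m m ℝ :=
  (hM.1.eigenvectorUnitary : Matrix m m ℝ) * diagonal (Real.sqrt ∘ hM.1.eigenvalues) *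
    (star hM.1.eigenvectorUnitary : Matrix m m ℝ)

namespace Matrix

section Sqrt

variable {m : Type*} [Fintype m] [DecidableEq m] {M : Matrix m m ℝ}

lemma PosSemidef.sqrt_eq_conjStarAlgAut (hM : M.PosSemidef) :
    hM.sqrt = Unitary.conjStarAlgAut ℝ _ hM.1.eigenvectorUnitary
      (diagonal (Real.sqrt ∘ hM.1.eigenvalues)) := by
  rw [Unitary.conjStarAlgAut_apply]
  rfl

lemma PosSemidef.sqrt_mul_self (hM : M.PosSemidef) : hM.sqrt * hM.sqrt = M := by
  rw [hM.sqrt_eq_conjStarAlgAut, ← map_mul, diagonal_mul_diagonal]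
  conv_rhs => rw [hM.1.spectral_theorem]
  congr 2
  ext i
  simp [Real.mul_self_sqrt (hM.eigenvalues_nonneg i)]

lemma PosSemidef.isHermitian_sqrt (hM : M.PosSemidef) : hM.sqrt.IsHermitian := by
  rw [IsHermitian, ← star_eq_conjTranspose, hM.sqrt_eq_conjStarAlgAut, ← map_star]
  simp [star_eq_conjTranspose]

lemma PosDef.isUnit_sqrt (hM : M.PosDef) : IsUnit hM.posSemidef.sqrt :=
  isUnit_of_mul_isUnit_left (hM.posSemidef.sqrt_mul_self ▸ hM.isUnit)

end Sqrt

section TracePos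

variable {m k R : Type*} [Fintype m] [CommRing R] [StarRing R]

lemma conjTranspose_mul_mul_apply_self (M : Matrix m m R) (x : Matrix m k R) (j : k) :
    (xᴴ * M * x) j j = star (fun u => x u j) ⬝ᵥ (M *ᵥ fun u => x u j) := by
  simp only [mul_apply, conjTranspose_apply, dotProduct, mulVec, Pi.star_apply, Finset.mul_sum,
    Finset.sum_mul, mul_assoc]
  exact Finset.sum_comm

lemma PosDef.trace_conjTranspose_mul_mul_pos [Fintype k] [PartialOrder R]
    [IsOrderedCancelAddMonoid R] {M : Matrix m m R} (hM : M.PosDef) {x : Matrix m k R}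
    (hx : x ≠ 0) : 0 < (xᴴ * M * x).trace := by
  obtain ⟨i, j, hij⟩ : ∃ i j, x i j ≠ 0 := by
    by_contra! h
    exact hx (ext h)
  refine Finset.sum_pos' (fun l _ => (hM.posSemidef.conjTranspose_mul_mul_same x).diag_nonneg)
    ⟨j, Finset.mem_univ j, ?_⟩
  rw [diag_apply, conjTranspose_mul_mul_apply_self]
  exact hM.dotProduct_mulVec_pos fun h => hij (congrFun h i)

end TracePos

section Spectrum

variable {m : Type*} [Fintype m] [DecidableEq m]

lemma PosDef.pos_of_mem_spectrum {M : Matrix m m ℝ} (hM : M.PosDef) {μ : ℝ}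
    (hμ : μ ∈ spectrum ℝ M) : 0 < μ := by
  obtain ⟨i, rfl⟩ := hM.1.spectrum_real_eq_range_eigenvalues ▸ hμ
  exact hM.eigenvalues_pos i

lemma IsHermitian.posDef_one_sub_mul_self {B : Matrix m m ℝ} (hB : B.IsHermitian)
    (h : ∀ i, |hB.eigenvalues i| < 1) : (1 - B * B).PosDef := by
  rw [hB.spectral_theorem, ← map_mul, ← map_one (Unitary.conjStarAlgAut ℝ _ hB.eigenvectorUnitary),
    ← map_sub, Unitary.conjStarAlgAut_apply, Unitary.isUnit_coe.posDef_star_right_conjugate_iff,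
    diagonal_mul_diagonal, ← diagonal_one, diagonal_sub]
  refine PosDef.diagonal fun i => ?_
  simp only [Function.comp_apply, RCLike.ofReal_real_eq_id, id]
  nlinarith [abs_mul_abs_self (hB.eigenvalues i), abs_nonneg (hB.eigenvalues i), h i]

lemma IsHermitian.exists_one_le_abs_eigenvalues {k : Type*} [Fintype k] {B : Matrix m m ℝ}
    (hB : B.IsHermitian) {x : Matrix m k ℝ} (hx : x ≠ 0)
    (h : ((B * x)ᵀ * (B * x)).trace = (xᵀ * x).trace) : ∃ i, 1 ≤ |hB.eigenvalues i| := by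
  by_contra! hlt
  have hpos := (hB.posDef_one_sub_mul_self hlt).trace_conjTranspose_mul_mul_pos hx
  have hBt : Bᵀ = B := by rw [← conjTranspose_eq_transpose_of_trivial]; exact hB.eq
  rw [conjTranspose_eq_transpose_of_trivial, Matrix.mul_sub, Matrix.sub_mul, trace_sub,
    Matrix.mul_one, ← h, transpose_mul, hBt] at hpos
  simp only [Matrix.mul_assoc, sub_self, lt_irrefl] at hpos

end Spectrum

end Matrix

section Blocks

variable {n p : ℕ}

lemma transpose_mul_mul_eq_sum_blk (Λ : Matrix (Fin n × Fin p) (Fin n × Fin p) ℝ)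
    (Q : Matrix (Fin n × Fin p) (Fin p) ℝ) :
    Qᵀ * Λ * Q = ∑ i, ∑ j, (blkv Q i)ᵀ * blk Λ i j * blkv Q j := by
  ext a b
  simp only [mul_apply, transpose_apply, Matrix.sum_apply, Fintype.sum_prod_type, Finset.sum_mul]
  exact (Finset.sum_congr rfl fun _ _ => Finset.sum_comm).trans Finset.sum_comm

lemma trace_eq_sum_trace_blk (Λ : Matrix (Fin n × Fin p) (Fin n × Fin p) ℝ) :
    Λ.trace = ∑ i, (blk Λ i i).trace := by
  simp [trace, Fintype.sum_prod_type, blk]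

lemma trace_transpose_mul_mul_eq_trace {Λ : Matrix (Fin n × Fin p) (Fin n × Fin p) ℝ}
    (hΛ : ∀ i j, i ≠ j → blk Λ i j = 0) {Q : Matrix (Fin n × Fin p) (Fin p) ℝ}
    (hQ : ∀ i, (blkv Q i)ᵀ * blkv Q i = 1) : (Qᵀ * Λ * Q).trace = Λ.trace := by
  rw [transpose_mul_mul_eq_sum_blk, trace_eq_sum_trace_blk, trace_sum]
  refine Finset.sum_congr rfl fun i _ => ?_
  rw [trace_sum, Finset.sum_eq_single i (fun j _ hji => by rw [hΛ i j hji.symm]; simp) (by simp),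
    trace_mul_cycle, mul_eq_one_comm.mp (hQ i), one_mul]

end Blocks

section GPMStep

variable {n p : ℕ} {A Λ S : Matrix (Fin n × Fin p) (Fin n × Fin p) ℝ}

lemma one_sub_inv_mul_mul_inv (hS : S.IsHermitian) (hSu : IsUnit S) (hSS : S * S = Λ)
    (A : Matrix (Fin n × Fin p) (Fin n × Fin p) ℝ) :
    1 - S⁻¹ * A * S⁻¹ = (S⁻¹)ᴴ * (Λ - A) * S⁻¹ := by
  have hdet := (isUnit_iff_isUnit_det S).mp hSu
  rw [conjTranspose_nonsing_inv, hS.eq, Matrix.mul_sub, Matrix.sub_mul, ← hSS,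
    ← Matrix.mul_assoc, nonsing_inv_mul S hdet, Matrix.one_mul, mul_nonsing_inv S hdet]

lemma exists_one_le_mem_spectrum_inv_mul_mul_inv (hA : A.PosSemidef) (hS : S.IsHermitian)
    (hSu : IsUnit S) (hSS : S * S = Λ) (hΛ : ∀ i j, i ≠ j → blk Λ i j = 0)
    {R R' : Matrix (Fin n × Fin p) (Fin p) ℝ} (hR : ∀ i, (blkv R i)ᵀ * blkv R i = 1)
    (hR' : ∀ i, (blkv R' i)ᵀ * blkv R' i = 1) (hR0 : R ≠ 0) (hstep : Λ * R' = A * R) :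
    ∃ μ ∈ spectrum ℝ (S⁻¹ * A * S⁻¹), 1 ≤ μ := by
  have hdet := (isUnit_iff_isUnit_det S).mp hSu
  have hSt : Sᵀ = S := by rw [← conjTranspose_eq_transpose_of_trivial]; exact hS.eq
  have hB : (S⁻¹ * A * S⁻¹).PosSemidef := by
    have := hA.conjTranspose_mul_mul_same S⁻¹
    rwa [conjTranspose_nonsing_inv, hS.eq] at this
  have hBx : S⁻¹ * A * S⁻¹ * (S * R) = S * R' := by
    rw [Matrix.mul_assoc, nonsing_inv_mul_cancel_left S R hdet, Matrix.mul_assoc, ← hstep, ← hSS,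
      Matrix.mul_assoc, nonsing_inv_mul_cancel_left S _ hdet]
  have hfrob : ∀ Q : Matrix (Fin n × Fin p) (Fin p) ℝ, (∀ i, (blkv Q i)ᵀ * blkv Q i = 1) →
      ((S * Q)ᵀ * (S * Q)).trace = Λ.trace := fun Q hQ => by
    rw [transpose_mul, hSt, ← trace_transpose_mul_mul_eq_trace hΛ hQ, ← hSS]
    simp only [Matrix.mul_assoc]
  have hx : S * R ≠ 0 := fun h =>
    hR0 (by rw [← nonsing_inv_mul_cancel_left S R hdet, h, Matrix.mul_zero])
  obtain ⟨i, hi⟩ := hB.1.exists_one_le_abs_eigenvalues hx (by rw [hBx, hfrob R' hR', hfrob R hR])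
  exact ⟨_, hB.1.eigenvalues_mem_spectrum_real i, abs_of_nonneg (hB.eigenvalues_nonneg i) ▸ hi⟩

end GPMStep

/-- Assume `Ã ⪰ 0`. If `Λ ≻ 0` is block diagonal and `R, R' ∈ SO(p)ⁿ` satisfy
one GPM step `Λ R' = Ã R`, then `Λ - Ã` is not positive definite; more
precisely the largest eigenvalue of `Λ^{-1/2} Ã Λ^{-1/2}` is at least `1`, so
the smallest eigenvalue of `I - Λ^{-1/2} Ã Λ^{-1/2}` is at most `0`. -/
theorem stmt6 {n p : ℕ} (hn : 0 < n) (hp : 0 < p)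
    (A Λ : Matrix (Fin n × Fin p) (Fin n × Fin p) ℝ)
    (hA : A.PosSemidef) (hΛ : Λ.PosDef)
    (hΛdiag : ∀ i j : Fin n, i ≠ j → blk Λ i j = 0)
    (R R' : Matrix (Fin n × Fin p) (Fin p) ℝ)
    (hR : ∀ i : Fin n, (blkv R i)ᵀ * blkv R i = 1 ∧ (blkv R i).det = 1)
    (hR' : ∀ i : Fin n, (blkv R' i)ᵀ * blkv R' i = 1 ∧ (blkv R' i).det = 1)
    (hstep : Λ * R' = A * R) :
    ¬ (Λ - A).PosDef ∧
    1 ≤ sSup (spectrum ℝ ((hΛ.posSemidef.sqrt)⁻¹ * A * (hΛ.posSemidef.sqrt)⁻¹)) ∧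
    sInf (spectrum ℝ
        ((1 : Matrix (Fin n × Fin p) (Fin n × Fin p) ℝ) -
          (hΛ.posSemidef.sqrt)⁻¹ * A * (hΛ.posSemidef.sqrt)⁻¹)) ≤ 0 := by
  set S := hΛ.posSemidef.sqrt
  have hS : S.IsHermitian := hΛ.posSemidef.isHermitian_sqrt
  have hSu : IsUnit S := hΛ.isUnit_sqrt
  have hSS : S * S = Λ := hΛ.posSemidef.sqrt_mul_self
  have hR0 : R ≠ 0 := by
    rintro rfl
    have : NeZero p := ⟨hp.ne'⟩
    have h := (hR ⟨0, hn⟩).1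
    rw [show blkv (0 : Matrix (Fin n × Fin p) (Fin p) ℝ) ⟨0, hn⟩ = 0 from rfl,
      Matrix.mul_zero] at h
    exact zero_ne_one h
  obtain ⟨μ, hμ, hμ1⟩ := exists_one_le_mem_spectrum_inv_mul_mul_inv hA hS hSu hSS hΛdiag
    (fun i => (hR i).1) (fun i => (hR' i).1) hR0 hstep
  have hμ' : 1 - μ ∈ spectrum ℝ (1 - S⁻¹ * A * S⁻¹) := by
    rw [← map_one (algebraMap ℝ _), ← spectrum.singleton_sub_eq]
    exact Set.sub_mem_sub rfl hμ
  refine ⟨fun hPD => ?_, hμ1.trans (le_csSup (finite_spectrum _).bddAbove hμ),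
    (csInf_le (finite_spectrum _).bddBelow hμ').trans (by linarith)⟩
  have h1 : (1 - S⁻¹ * A * S⁻¹).PosDef := one_sub_inv_mul_mul_inv hS hSu hSS A ▸
    hPD.conjTranspose_mul_mul_same (mulVec_injective_of_isUnit (isUnit_nonsing_inv_iff.mpr hSu))
  linarith [h1.pos_of_mem_spectrum hμ']
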